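/- Let n = 2^k, N = n², and let d < n. Let r, ℓ, m be positive integers with n − r > d, r < d − 1, m ≥ n − d − r, m ≤ N, and suppose n^r · C(N−(n−d−r), m−(n−d−r)) ≤ C(N, m). Then Dim(⟨∂^r NW_d⟩_{(ℓ,m)}) ≥ (1/2)·n^r·C(N, m)·C(ℓ−1, m−1), where C(a,b) denotes the binomial coefficient. -/

import Mathlib

open MvPolynomial

/-- Iterated partial derivative along a list of variables. -/
noncomputable def derivList {σ F : Type*} [CommSemiring F]
    (L : List σ) (P : MvPolynomial σ F) : MvPolynomial σ F :=
  L.foldr (fun x Q => MvPolynomial.pderiv x Q) P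

/-- The partial derivative `∂_γ P` with respect to the monomial with exponent vector `γ`
(first-order partial derivatives iterated according to the exponent vector). -/
noncomputable def derivMon {σ F : Type*} [CommSemiring F]
    (γ : σ →₀ ℕ) (P : MvPolynomial σ F) : MvPolynomial σ F :=
  derivList (Finsupp.toMultiset γ).toList P

/-- The degree of a monomial given by its exponent vector. -/
def monDeg {σ : Type*} (e : σ →₀ ℕ) : ℕ := e.sum fun _ c => c

/-- The space `⟨∂^r P⟩_{(ℓ,m)}` of support-`m` degree-`ℓ` shifted partial derivatives of
order `r` of `P`. -/
noncomputable def shiftedSpan {σ F : Type*} [CommSemiring F]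
    (r ℓ m : ℕ) (P : MvPolynomial σ F) : Submodule F (MvPolynomial σ F) :=
  Submodule.span F { Q | ∃ e γ : σ →₀ ℕ, monDeg e = ℓ ∧ e.support.card = m ∧
    monDeg γ = r ∧ Q = MvPolynomial.monomial e (1 : F) * derivMon γ P }

/-- The Nisan–Wigderson polynomial `NW_d`. -/
noncomputable def NW (F : Type*) [Field F] [Fintype F] (d : ℕ) :
    MvPolynomial (F × F) F :=
  ∑ a : Fin d → F, ∏ i : F, MvPolynomial.X (i, ∑ j : Fin d, a j * i ^ (j : ℕ))

open Finset

/-!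
Fix `r` distinct points `ι j` of `F` and, for `b : Fin r → F`, differentiate `NW_d` along
`γ_b = ∏ⱼ x_{ι j, b j}`. The surviving monomials of `∂_{γ_b} NW_d` are the graphs, minus `γ_b`,
of the polynomials of degree `< d` interpolating `b`; they are pairwise distinct, so the
derivative is nonzero and its leading monomial (for any monomial order) is one of them.
Shifting by the `C(N, m) · C(ℓ-1, m-1)` monomials of degree `ℓ` and support `m` gives, over all
`n^r` choices of `b`, that many leading monomials of elements of the space, counted with
multiplicity. For `b ≠ b'` the interpolants agree in fewer than `d` points, so a coincidence of
shifted leading monomials forces `n - d - r` prescribed variables into the support of the shift;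
this bounds every pairwise overlap by `C(N - (n-d-r), m - (n-d-r)) · C(ℓ-1, m-1)`. The hypothesis
on the binomials and the second Bonferroni inequality then leave at least half of the leading
monomials distinct, and distinct leading monomials are linearly independent.
-/

theorem Finset.two_mul_sum_card_le_two_mul_card_biUnion_add {ι α : Type*} [DecidableEq ι]
    [DecidableEq α] (s : Finset ι) (T : ι → Finset α) :
    2 * ∑ i ∈ s, #(T i) ≤ 2 * #(s.biUnion T) + ∑ p ∈ s.offDiag, #(T p.1 ∩ T p.2) := by
  set U := s.biUnion T
  set c : α → ℕ := fun x => #{i ∈ s | x ∈ T i}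
  have card_eq_sum (t : Finset α) (ht : t ⊆ U) : #t = ∑ x ∈ U, if x ∈ t then 1 else 0 := by
    rw [sum_boole, filter_mem_eq_inter, inter_eq_right.2 ht, Nat.cast_id]
  have hsum : ∑ i ∈ s, #(T i) = ∑ x ∈ U, c x := by
    rw [sum_congr rfl fun i hi => card_eq_sum _ (subset_biUnion_of_mem T hi), sum_comm]
    simp_rw [c, sum_boole, Nat.cast_id]
  have hpairs : ∑ p ∈ s.offDiag, #(T p.1 ∩ T p.2) = ∑ x ∈ U, (c x * c x - c x) := by
    rw [sum_congr rfl fun p hp => card_eq_sum _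
      (inter_subset_left.trans (subset_biUnion_of_mem T (mem_offDiag.1 hp).1)), sum_comm]
    refine sum_congr rfl fun x _ => ?_
    rw [sum_boole, Nat.cast_id, ← offDiag_card]
    congr 1
    ext p
    simp only [mem_filter, mem_offDiag, mem_inter]
    tauto
  have hpoint (x : α) : 2 * c x ≤ 2 + (c x * c x - c x) := by
    rcases c x with _ | k
    · simp
    · have := Nat.le_mul_self k
      have h : (k + 1) * (k + 1) = k * k + 2 * k + 1 := by ring
      omega
  rw [hsum, hpairs, mul_sum, card_eq_sum_ones, mul_sum, ← sum_add_distrib]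
  exact sum_le_sum fun x _ => by simpa using hpoint x

theorem Finset.mul_le_two_mul_card_biUnion {ι α : Type*} [DecidableEq ι] [DecidableEq α]
    (s : Finset ι) (T : ι → Finset α) {c X : ℕ} (hcard : ∀ i ∈ s, #(T i) = c)
    (hinter : ∀ i ∈ s, ∀ j ∈ s, i ≠ j → #(T i ∩ T j) ≤ X) (hX : #s * X ≤ c) :
    #s * c ≤ 2 * #(s.biUnion T) := by
  have hpairs : ∑ p ∈ s.offDiag, #(T p.1 ∩ T p.2) ≤ #s * c :=
    calc ∑ p ∈ s.offDiag, #(T p.1 ∩ T p.2) ≤ #s.offDiag * X :=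
          sum_le_card_nsmul _ _ _ fun p hp => by
            obtain ⟨hp₁, hp₂, hne⟩ := mem_offDiag.1 hp
            exact hinter _ hp₁ _ hp₂ hne
      _ ≤ #s * (#s * X) := by
          rw [offDiag_card, ← mul_assoc]
          exact Nat.mul_le_mul_right _ (Nat.sub_le _ _)
      _ ≤ #s * c := Nat.mul_le_mul_left _ hX
  have := two_mul_sum_card_le_two_mul_card_biUnion_add s T
  rw [sum_congr rfl hcard, sum_const, smul_eq_mul] at this
  omega

section IndicatorMon

variable {σ : Type*} [DecidableEq σ]

noncomputable def indicatorMon (A : Finset σ) : σ →₀ ℕ := Multiset.toFinsupp A.val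

theorem indicatorMon_apply (A : Finset σ) (x : σ) :
    indicatorMon A x = if x ∈ A then 1 else 0 :=
  Multiset.count_eq_of_nodup A.nodup

@[simp] theorem support_indicatorMon (A : Finset σ) : (indicatorMon A).support = A := by
  ext x; simp [indicatorMon_apply]

theorem toMultiset_indicatorMon (A : Finset σ) : Finsupp.toMultiset (indicatorMon A) = A.val :=
  Multiset.toFinsupp_toMultiset _

theorem monDeg_indicatorMon (A : Finset σ) : monDeg (indicatorMon A) = #A := by
  calc monDeg (indicatorMon A) = Multiset.card (Finsupp.toMultiset (indicatorMon A)) :=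
        (Finsupp.card_toMultiset _).symm
    _ = #A := by rw [toMultiset_indicatorMon, card_val]

theorem indicatorMon_sub_single (A : Finset σ) (x : σ) :
    indicatorMon A - Finsupp.single x 1 = indicatorMon (A.erase x) := by
  ext y
  obtain rfl | hy := eq_or_ne y x
  · by_cases hyA : y ∈ A <;> simp [indicatorMon_apply, hyA]
  · simp [indicatorMon_apply, hy]

theorem prod_X_eq_monomial_indicatorMon {R : Type*} [CommSemiring R] (A : Finset σ) :
    ∏ x ∈ A, (X x : MvPolynomial σ R) = monomial (indicatorMon A) 1 := by
  rw [← prod_X_pow_eq_monomial, support_indicatorMon]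
  exact prod_congr rfl fun x hx => by rw [indicatorMon_apply, if_pos hx, pow_one]

theorem sdiff_subset_support_of_add_indicatorMon_eq {A A' : Finset σ} {e e' : σ →₀ ℕ}
    (h : e + indicatorMon A = e' + indicatorMon A') : A' \ A ⊆ e.support := by
  intro x hx
  rw [mem_sdiff] at hx
  have := DFunLike.congr_fun h x
  simp only [Finsupp.add_apply, indicatorMon_apply, hx.1, hx.2, if_true, if_false] at this
  rw [Finsupp.mem_support_iff]
  omega

end IndicatorMon

section Derivatives

variable {σ R : Type*} [CommSemiring R]

theorem derivList_sum {ι : Type*} (L : List σ) (s : Finset ι) (f : ι → MvPolynomial σ R) :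
    derivList L (∑ i ∈ s, f i) = ∑ i ∈ s, derivList L (f i) := by
  induction L with
  | nil => rfl
  | cons x L ih => exact (congrArg (pderiv x) ih).trans (map_sum _ _ _)

theorem pderiv_monomial_indicatorMon [DecidableEq σ] (x : σ) (A : Finset σ) (c : R) :
    pderiv x (monomial (indicatorMon A) c) =
      if x ∈ A then monomial (indicatorMon (A.erase x)) c else 0 := by
  rw [pderiv_monomial, indicatorMon_sub_single, indicatorMon_apply]
  split_ifs <;> simp

theorem derivList_monomial_indicatorMon [DecidableEq σ] {L : List σ} (hL : L.Nodup)
    (A : Finset σ) :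
    derivList L (monomial (indicatorMon A) (1 : R)) =
      if L.toFinset ⊆ A then monomial (indicatorMon (A \ L.toFinset)) 1 else 0 := by
  induction L with
  | nil => simp [derivList]
  | cons x L ih =>
    obtain ⟨hxL, hL⟩ := List.nodup_cons.1 hL
    change pderiv x (derivList L _) = _
    rw [ih hL]
    by_cases hLA : L.toFinset ⊆ A
    · rw [if_pos hLA, pderiv_monomial_indicatorMon, List.toFinset_cons, ← sdiff_insert]
      simp only [mem_sdiff, List.mem_toFinset, hxL, not_false_eq_true, and_true,
        insert_subset_iff, hLA]
    · rw [if_neg hLA, map_zero, List.toFinset_cons,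
        if_neg fun h => hLA (insert_subset_iff.1 h).2]

theorem derivMon_indicatorMon_monomial_indicatorMon [DecidableEq σ] (A B : Finset σ) :
    derivMon (indicatorMon A) (monomial (indicatorMon B) (1 : R)) =
      if A ⊆ B then monomial (indicatorMon (B \ A)) 1 else 0 := by
  rw [derivMon, toMultiset_indicatorMon, ← Finset.toList,
    derivList_monomial_indicatorMon A.nodup_toList, toList_toFinset]
end Derivatives

section ExponentCounting

theorem monDeg_add {σ : Type*} (e f : σ →₀ ℕ) : monDeg (e + f) = monDeg e + monDeg f :=
  Finsupp.sum_add_index' (fun _ => rfl) fun _ _ _ => rfl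

theorem card_support_le_monDeg {σ : Type*} (e : σ →₀ ℕ) : #e.support ≤ monDeg e := by
  rw [monDeg, Finsupp.sum, card_eq_sum_ones]
  exact sum_le_sum fun x hx => Nat.one_le_iff_ne_zero.2 (Finsupp.mem_support_iff.1 hx)

variable {σ : Type*} [DecidableEq σ]

theorem mem_finsuppAntidiag_iff_monDeg {s : Finset σ} {n : ℕ} {e : σ →₀ ℕ} :
    e ∈ finsuppAntidiag s n ↔ monDeg e = n ∧ e.support ⊆ s :=
  mem_finsuppAntidiag'

theorem indicatorMon_le_of_support_eq {e : σ →₀ ℕ} {A : Finset σ} (he : e.support = A) :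
    indicatorMon A ≤ e := fun x => by
  rw [indicatorMon_apply]
  split_ifs with hx
  · exact Nat.one_le_iff_ne_zero.2 (Finsupp.mem_support_iff.1 (he ▸ hx))
  · exact Nat.zero_le _

theorem support_add_indicatorMon {f : σ →₀ ℕ} {A : Finset σ} (hf : f.support ⊆ A) :
    (f + indicatorMon A).support = A := by
  ext x
  simp only [Finsupp.mem_support_iff, Finsupp.add_apply, indicatorMon_apply]
  split_ifs with hx
  · simp [hx]
  · simp [hx, Finsupp.notMem_support_iff.1 (mt (@hf x) hx)]

variable [Fintype σ]

/-- A monomial with support exactly `A` is `∏ x ∈ A, X x` times an arbitrary monomial in the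
variables of `A`; stars and bars then count the latter. -/
theorem card_filter_support_eq {ℓ : ℕ} (hℓ : 0 < ℓ) {A : Finset σ} (hA : A.Nonempty) :
    #{e ∈ finsuppAntidiag univ ℓ | e.support = A} = (ℓ - 1).choose (#A - 1) := by
  have hA' := hA.card_pos
  rcases lt_or_ge ℓ #A with hlt | hle
  · rw [Nat.choose_eq_zero_of_lt (by omega), card_eq_zero, filter_eq_empty_iff]
    intro e he hsupp
    have := card_support_le_monDeg e
    rw [hsupp, (mem_finsuppAntidiag_iff_monDeg.1 he).1] at this
    omega
  rw [← Nat.choose_symm_of_eq_add (by omega : ℓ - 1 = (ℓ - #A) + (#A - 1)),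
    show ℓ - 1 = #A + (ℓ - #A) - 1 by omega, ← card_finsuppAntidiag_nat_eq_choose]
  refine card_nbij' (· - indicatorMon A) (· + indicatorMon A) (fun e he => ?_) (fun f hf => ?_)
    (fun e he => ?_) fun f _ => add_tsub_cancel_right f _
  · dsimp only
    rw [mem_coe, mem_filter, mem_finsuppAntidiag_iff_monDeg] at he
    obtain ⟨⟨hdeg, -⟩, hsupp⟩ := he
    have hle := indicatorMon_le_of_support_eq hsupp
    have hdeg' := monDeg_add (e - indicatorMon A) (indicatorMon A)
    rw [tsub_add_cancel_of_le hle, monDeg_indicatorMon] at hdeg'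
    refine mem_finsuppAntidiag_iff_monDeg.2 ⟨by omega, fun x hx => ?_⟩
    rw [Finsupp.mem_support_iff, Finsupp.tsub_apply] at hx
    rw [← hsupp, Finsupp.mem_support_iff]
    omega
  · obtain ⟨hdeg, hsupp⟩ := mem_finsuppAntidiag_iff_monDeg.1 hf
    rw [mem_coe, mem_filter, mem_finsuppAntidiag_iff_monDeg, monDeg_add, monDeg_indicatorMon]
    exact ⟨⟨by omega, subset_univ _⟩, support_add_indicatorMon hsupp⟩
  · exact tsub_add_cancel_of_le (indicatorMon_le_of_support_eq (mem_filter.1 he).2)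

variable (σ) in
noncomputable def shiftMons (ℓ m : ℕ) : Finset (σ →₀ ℕ) :=
  {e ∈ finsuppAntidiag univ ℓ | #e.support = m}

theorem mem_shiftMons {ℓ m : ℕ} {e : σ →₀ ℕ} :
    e ∈ shiftMons σ ℓ m ↔ monDeg e = ℓ ∧ #e.support = m := by
  rw [shiftMons, mem_filter, mem_finsuppAntidiag_iff_monDeg]
  simp

theorem card_filter_shiftMons {ℓ m : ℕ} (hℓ : 0 < ℓ) (hm : 0 < m) (P : Finset σ → Prop)
    [DecidablePred P] :
    #{e ∈ shiftMons σ ℓ m | P e.support} =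
      #{A ∈ powersetCard m univ | P A} * (ℓ - 1).choose (m - 1) := by
  rw [card_eq_sum_card_fiberwise (f := Finsupp.support)
      (t := {A ∈ powersetCard m univ | P A}) fun e he => by
      rw [mem_coe, mem_filter, mem_shiftMons] at he
      simp [mem_powersetCard, he.1.2, he.2], ← smul_eq_mul, ← sum_const]
  refine sum_congr rfl fun A hA => ?_
  rw [mem_filter, mem_powersetCard] at hA
  rw [← hA.1.2, ← card_filter_support_eq hℓ (card_pos.1 (hA.1.2 ▸ hm))]
  congr 1
  ext e
  simp only [shiftMons, mem_filter]
  constructor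
  · rintro ⟨⟨⟨he, -⟩, -⟩, rfl⟩
    exact ⟨he, rfl⟩
  · rintro ⟨he, rfl⟩
    exact ⟨⟨⟨he, rfl⟩, hA.2⟩, rfl⟩

theorem card_shiftMons {ℓ m : ℕ} (hℓ : 0 < ℓ) (hm : 0 < m) :
    #(shiftMons σ ℓ m) = (Fintype.card σ).choose m * (ℓ - 1).choose (m - 1) := by
  simpa using card_filter_shiftMons hℓ hm fun _ => True

theorem card_filter_shiftMons_subset_support_le {ℓ m : ℕ} (hℓ : 0 < ℓ) (hm : 0 < m)
    (S : Finset σ) :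
    #{e ∈ shiftMons σ ℓ m | S ⊆ e.support} ≤
      (Fintype.card σ - #S).choose (m - #S) * (ℓ - 1).choose (m - 1) := by
  rw [card_filter_shiftMons hℓ hm]
  refine Nat.mul_le_mul_right _ ?_
  calc #{A ∈ powersetCard m univ | S ⊆ A} ≤ #(powersetCard (m - #S) (univ \ S)) := by
        refine card_le_card_of_injOn (· \ S) (fun A hA => ?_) fun A hA B hB hAB => ?_
        · rw [mem_coe, mem_filter, mem_powersetCard] at hA
          simp [mem_powersetCard, card_sdiff_of_subset hA.2, hA.1.2, sdiff_subset_sdiff]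
        · rw [mem_coe, mem_filter] at hA hB
          rw [← sdiff_union_of_subset hA.2, ← sdiff_union_of_subset hB.2]
          exact congrArg (· ∪ S) hAB
    _ = _ := by rw [card_powersetCard, card_sdiff_of_subset (subset_univ S), card_univ]

theorem card_inter_image_add_indicatorMon_le {ℓ m Δ : ℕ} (hℓ : 0 < ℓ) (hm : 0 < m)
    {A A' : Finset σ} (hΔ : Δ ≤ #(A' \ A)) :
    #((shiftMons σ ℓ m).image (· + indicatorMon A) ∩
        (shiftMons σ ℓ m).image (· + indicatorMon A')) ≤
      (Fintype.card σ - Δ).choose (m - Δ) * (ℓ - 1).choose (m - 1) := by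
  obtain ⟨S, hSsub, rfl⟩ := exists_subset_card_eq hΔ
  have hsub : (shiftMons σ ℓ m).image (· + indicatorMon A) ∩
      (shiftMons σ ℓ m).image (· + indicatorMon A') ⊆
        {e ∈ shiftMons σ ℓ m | S ⊆ e.support}.image (· + indicatorMon A) := by
    intro w hw
    obtain ⟨hw, hw'⟩ := mem_inter.1 hw
    obtain ⟨e, he, rfl⟩ := mem_image.1 hw
    obtain ⟨e', -, heq⟩ := mem_image.1 hw'
    exact mem_image.2 ⟨e, mem_filter.2
      ⟨he, hSsub.trans (sdiff_subset_support_of_add_indicatorMon_eq heq.symm)⟩, rfl⟩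
  exact (card_le_card hsub).trans <| card_image_le.trans <|
    card_filter_shiftMons_subset_support_le hℓ hm S

end ExponentCounting

section LeadingMonomials

variable {σ K : Type*} [Field K]

/-- The leading term of the summand with the largest leading monomial cannot cancel. -/
theorem MonomialOrder.linearIndependent_of_injective_degree (mo : MonomialOrder σ) {ι : Type*}
    {p : ι → MvPolynomial σ K} (hp : ∀ i, p i ≠ 0)
    (hinj : Function.Injective fun i => mo.degree (p i)) : LinearIndependent K p := by
  classical
  rw [linearIndependent_iff']
  intro s g hsum i hi
  by_contra hgi
  obtain ⟨i₀, hi₀, hmax⟩ := exists_max_image {j ∈ s | g j ≠ 0}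
    (fun j => mo.toSyn (mo.degree (p j))) ⟨i, mem_filter.2 ⟨hi, hgi⟩⟩
  rw [mem_filter] at hi₀
  have hcoeff := congrArg (coeff (mo.degree (p i₀))) hsum
  rw [coeff_sum, coeff_zero, sum_eq_single_of_mem i₀ hi₀.1 fun j hj hji₀ => ?_, coeff_smul,
    smul_eq_mul] at hcoeff
  · exact mul_ne_zero hi₀.2 (mo.coeff_degree_ne_zero_iff.2 (hp i₀)) hcoeff
  · rw [coeff_smul, smul_eq_mul]
    by_cases hgj : g j = 0
    · rw [hgj, zero_mul]
    · have hle := hmax j (mem_filter.2 ⟨hj, hgj⟩)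
      have hlt : mo.toSyn (mo.degree (p j)) < mo.toSyn (mo.degree (p i₀)) :=
        lt_of_le_of_ne hle fun h => hji₀ (hinj (mo.toSyn.injective h))
      rw [mo.coeff_eq_zero_of_lt hlt, mul_zero]

theorem MonomialOrder.card_le_finrank (mo : MonomialOrder σ) (W : Submodule K (MvPolynomial σ K))
    [FiniteDimensional K W] (T : Finset (σ →₀ ℕ))
    (hT : ∀ w ∈ T, ∃ P ∈ W, P ≠ 0 ∧ mo.degree P = w) : #T ≤ Module.finrank K W := by
  choose P hPW hP0 hPdeg using hT
  let q : T → W := fun w => ⟨P w w.2, hPW w w.2⟩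
  have hq : LinearIndependent K (W.subtype ∘ q) :=
    mo.linearIndependent_of_injective_degree (fun w => hP0 w w.2) fun w w' h =>
      Subtype.ext <| by simpa [q, hPdeg] using h
  simpa using (LinearIndependent.of_comp _ hq).fintype_card_le_finrank

theorem finiteDimensional_shiftedSpan [Fintype σ] (r ℓ m : ℕ) (P : MvPolynomial σ K) :
    FiniteDimensional K (shiftedSpan r ℓ m P) := by
  classical
  refine FiniteDimensional.span_of_finite K <| Set.Finite.subset
    ((finsuppAntidiag univ ℓ ×ˢ finsuppAntidiag univ r).image
      fun eγ => monomial eγ.1 (1 : K) * derivMon eγ.2 P).finite_toSet ?_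
  rintro Q ⟨e, γ, he, -, hγ, rfl⟩
  simp only [coe_image, coe_product, Set.mem_image, Set.mem_prod, mem_coe,
    mem_finsuppAntidiag_iff_monDeg]
  exact ⟨(e, γ), ⟨⟨he, subset_univ _⟩, hγ, subset_univ _⟩, rfl⟩

theorem exists_mem_shiftedSpan_degree_eq [Fintype σ] [DecidableEq σ] (mo : MonomialOrder σ)
    {r ℓ m : ℕ} {P : MvPolynomial σ K} {γ : σ →₀ ℕ} (hγ : monDeg γ = r)
    (hP : derivMon γ P ≠ 0) {e : σ →₀ ℕ} (he : e ∈ shiftMons σ ℓ m) :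
    ∃ Q ∈ shiftedSpan r ℓ m P, Q ≠ 0 ∧ mo.degree Q = e + mo.degree (derivMon γ P) := by
  classical
  have he0 : monomial e (1 : K) ≠ 0 := by simp
  obtain ⟨hdeg, hsupp⟩ := mem_shiftMons.1 he
  refine ⟨monomial e 1 * derivMon γ P, Submodule.subset_span ⟨e, γ, hdeg, hsupp, hγ, rfl⟩,
    mul_ne_zero he0 hP, ?_⟩
  rw [mo.degree_mul he0 hP, mo.degree_monomial, if_neg one_ne_zero]

theorem MonomialOrder.sum_monomial_one_ne_zero_and_degree_mem {σ R : Type*} [CommSemiring R]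
    [Nontrivial R] (mo : MonomialOrder σ) {S : Finset (σ →₀ ℕ)} (hS : S.Nonempty) :
    ∑ v ∈ S, monomial v (1 : R) ≠ 0 ∧ mo.degree (∑ v ∈ S, monomial v (1 : R)) ∈ S := by
  classical
  have hcoeff (w : σ →₀ ℕ) : coeff w (∑ v ∈ S, monomial v (1 : R)) = if w ∈ S then 1 else 0 := by
    simp [coeff_sum, coeff_monomial]
  have hne : ∑ v ∈ S, monomial v (1 : R) ≠ 0 := fun h => by
    obtain ⟨v, hv⟩ := hS
    simpa [h, hv] using hcoeff v
  refine ⟨hne, by_contra fun hnot => mo.coeff_degree_ne_zero_iff.2 hne ?_⟩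
  rw [hcoeff, if_neg hnot]

end LeadingMonomials

section Graphs

variable {κ α β : Type*} [Fintype κ]

def graphOn (ι : κ ↪ α) (b : κ → β) : Finset (α × β) :=
  univ.map ⟨fun j => (ι j, b j), fun _ _ h => ι.injective (congrArg Prod.fst h)⟩

theorem card_graphOn (ι : κ ↪ α) (b : κ → β) : #(graphOn ι b) = Fintype.card κ := by
  rw [graphOn, card_map, card_univ]

theorem mem_graphOn {ι : κ ↪ α} {b : κ → β} {p : α × β} :
    p ∈ graphOn ι b ↔ ∃ j, (ι j, b j) = p := by
  simp only [graphOn, mem_map, mem_univ, true_and]; rfl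

theorem graphOn_subset_graphOn_refl_iff [Fintype α] (ι : κ ↪ α) (b : κ → β) (f : α → β) :
    graphOn ι b ⊆ graphOn (.refl α) f ↔ ∀ j, f (ι j) = b j := by
  constructor
  · intro h j
    obtain ⟨x, hx⟩ := mem_graphOn.1 (h (mem_graphOn.2 ⟨j, rfl⟩))
    simp only [Function.Embedding.refl_apply, Prod.ext_iff] at hx
    exact hx.1 ▸ hx.2
  · intro h p hp
    obtain ⟨j, rfl⟩ := mem_graphOn.1 hp
    exact mem_graphOn.2 ⟨ι j, by simp [h j]⟩

theorem card_graphOn_refl_inter [Fintype α] [DecidableEq α] [DecidableEq β] (f g : α → β) :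
    #(graphOn (.refl α) f ∩ graphOn (.refl α) g) = #{x | f x = g x} := by
  refine card_nbij' Prod.fst (fun x => (x, f x)) ?_ ?_ ?_ ?_ <;>
    simp +contextual [Set.MapsTo, Set.LeftInvOn, mem_graphOn, Prod.ext_iff]

end Graphs

section ReedSolomon

open Polynomial

variable {F : Type*} [Field F] [DecidableEq F] {d : ℕ}

theorem eval_ofFn (a : Fin d → F) (x : F) : (ofFn d a).eval x = ∑ j, a j * x ^ (j : ℕ) := by
  simp [ofFn_eq_sum_monomial, eval_finsetSum]

theorem card_filter_eval_ofFn_eq_lt [Fintype F] {a a' : Fin d → F} (h : a ≠ a') :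
    #{x | (ofFn d a).eval x = (ofFn d a').eval x} < d := by
  have hp : ofFn d (a - a') ≠ 0 := by
    rw [Ne, ← map_zero (ofFn d), (injective_ofFn d).eq_iff]
    exact sub_ne_zero.2 h
  refine (card_le_degree_of_subset_roots fun x hx => ?_).trans_lt
    (ofFn_natDegree_lt (Nat.one_le_iff_ne_zero.2 (ne_zero_of_ofFn_ne_zero hp)) (a - a'))
  rw [mem_roots hp, IsRoot, map_sub, Polynomial.eval_sub, sub_eq_zero]
  exact (mem_filter.1 hx).2

theorem exists_eval_ofFn_eq {κ : Type*} [Fintype κ] [DecidableEq κ] (ι : κ ↪ F)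
    (hκ : Fintype.card κ < d) (b : κ → F) : ∃ a : Fin d → F, ∀ j, (ofFn d a).eval (ι j) = b j := by
  have hinj : Set.InjOn ι (univ : Finset κ) := ι.injective.injOn
  set p := Lagrange.interpolate univ ι b
  have hdeg : p.natDegree < d := by
    rcases eq_or_ne p 0 with hp | hp
    · rw [hp, natDegree_zero]; omega
    · rw [natDegree_lt_iff_degree_lt hp]
      exact (Lagrange.degree_interpolate_lt b hinj).trans_le (by simpa using hκ.le)
  refine ⟨toFn d p, fun j => ?_⟩
  rw [ofFn_comp_toFn_eq_id_of_natDegree_lt hdeg]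
  exact Lagrange.eval_interpolate_at_node b hinj (mem_univ j)

end ReedSolomon

section NisanWigderson

open Polynomial (ofFn)

variable {F : Type*} [Field F] [Fintype F] [DecidableEq F] {d : ℕ}

variable (d) in
noncomputable def polyGraph (a : Fin d → F) : Finset (F × F) :=
  graphOn (.refl F) fun x => (ofFn d a).eval x

theorem card_polyGraph (a : Fin d → F) : #(polyGraph d a) = Fintype.card F :=
  card_graphOn _ _

variable (F d) in
theorem NW_eq_sum_monomial :
    NW F d = ∑ a : Fin d → F, monomial (indicatorMon (polyGraph d a)) 1 := by
  refine sum_congr rfl fun a _ => ?_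
  rw [← prod_X_eq_monomial_indicatorMon, polyGraph, graphOn, prod_map]
  simp [eval_ofFn]

variable {κ : Type*} [Fintype κ]

theorem graphOn_subset_polyGraph_iff (ι : κ ↪ F) (b : κ → F) (a : Fin d → F) :
    graphOn ι b ⊆ polyGraph d a ↔ ∀ j, (ofFn d a).eval (ι j) = b j :=
  graphOn_subset_graphOn_refl_iff _ _ _

theorem derivMon_NW (ι : κ ↪ F) (b : κ → F) :
    derivMon (indicatorMon (graphOn ι b)) (NW F d) =
      ∑ a ∈ {a : Fin d → F | ∀ j, (ofFn d a).eval (ι j) = b j},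
        monomial (indicatorMon (polyGraph d a \ graphOn ι b)) 1 := by
  rw [NW_eq_sum_monomial, derivMon, derivList_sum, sum_filter]
  refine sum_congr rfl fun a _ => ?_
  rw [← derivMon, derivMon_indicatorMon_monomial_indicatorMon]
  exact if_congr (graphOn_subset_polyGraph_iff _ _ _) rfl rfl

/-- Distinct interpolants of `b` give distinct monomials in `derivMon_NW`, so nothing cancels there,
even in characteristic `2`. -/
theorem derivMon_NW_ne_zero_and_degree_eq [DecidableEq κ] (mo : MonomialOrder (F × F))
    (ι : κ ↪ F) (hκ : Fintype.card κ < d) (hd : d ≤ Fintype.card F) (b : κ → F) :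
    derivMon (indicatorMon (graphOn ι b)) (NW F d) ≠ 0 ∧
      ∃ a : Fin d → F, (∀ j, (ofFn d a).eval (ι j) = b j) ∧
        mo.degree (derivMon (indicatorMon (graphOn ι b)) (NW F d)) =
          indicatorMon (polyGraph d a \ graphOn ι b) := by
  set A : Finset (Fin d → F) := {a | ∀ j, (ofFn d a).eval (ι j) = b j} with hA
  have hsub {a : Fin d → F} (ha : a ∈ A) : graphOn ι b ⊆ polyGraph d a :=
    (graphOn_subset_polyGraph_iff _ _ _).2 (mem_filter.1 ha).2
  have hinj : Set.InjOn (fun a => indicatorMon (polyGraph d a \ graphOn ι b)) A := by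
    intro a ha a' ha' h
    have hgraph : polyGraph d a = polyGraph d a' := by
      rw [← sdiff_union_of_subset (hsub ha), ← sdiff_union_of_subset (hsub ha')]
      congr 1
      simpa using congrArg Finsupp.support h
    by_contra hne
    have := card_filter_eval_ofFn_eq_lt hne
    rw [← card_graphOn_refl_inter, ← polyGraph, ← polyGraph, hgraph, inter_self,
      card_polyGraph] at this
    omega
  obtain ⟨a₀, ha₀⟩ := exists_eval_ofFn_eq ι hκ b
  rw [derivMon_NW, ← hA, ← sum_image (f := fun w => monomial w (1 : F)) hinj]
  obtain ⟨hne, hmem⟩ := mo.sum_monomial_one_ne_zero_and_degree_mem (R := F)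
    (image_nonempty.2 (⟨a₀, by simpa [hA] using ha₀⟩ : A.Nonempty))
  obtain ⟨a, ha, hdeg⟩ := mem_image.1 hmem
  exact ⟨hne, a, by simpa [hA] using ha, hdeg.symm⟩

/-- The two interpolants differ, so they agree in fewer than `d` points. -/
theorem card_sub_sub_le_card_sdiff_polyGraph (ι : κ ↪ F) {b b' : κ → F} (hbb' : b ≠ b')
    {a a' : Fin d → F} (ha : ∀ j, (ofFn d a).eval (ι j) = b j)
    (ha' : ∀ j, (ofFn d a').eval (ι j) = b' j) :
    Fintype.card F - d - Fintype.card κ ≤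
      #((polyGraph d a' \ graphOn ι b') \ (polyGraph d a \ graphOn ι b)) := by
  have haa' : a' ≠ a := by
    rintro rfl
    exact hbb' (funext fun j => (ha j).symm.trans (ha' j))
  have hB : #(polyGraph d a' \ graphOn ι b') = Fintype.card F - Fintype.card κ := by
    rw [card_sdiff_of_subset ((graphOn_subset_polyGraph_iff _ _ _).2 ha'), card_polyGraph,
      card_graphOn]
  have hagree : #((polyGraph d a' \ graphOn ι b') ∩ polyGraph d a) < d :=
    calc #((polyGraph d a' \ graphOn ι b') ∩ polyGraph d a) ≤ #(polyGraph d a' ∩ polyGraph d a) :=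
          card_le_card (inter_subset_inter_right sdiff_subset)
      _ < d := (card_graphOn_refl_inter _ _).trans_lt (card_filter_eval_ofFn_eq_lt haa')
  have hsplit := card_sdiff_add_card_inter (polyGraph d a' \ graphOn ι b') (polyGraph d a)
  have hmono : #((polyGraph d a' \ graphOn ι b') \ polyGraph d a) ≤
      #((polyGraph d a' \ graphOn ι b') \ (polyGraph d a \ graphOn ι b)) :=
    card_le_card (sdiff_subset_sdiff le_rfl sdiff_subset)
  omega

variable (d) in
noncomputable def shiftedLeadingMons (mo : MonomialOrder (F × F)) (ι : κ ↪ F) (ℓ m : ℕ)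
    (b : κ → F) : Finset ((F × F) →₀ ℕ) :=
  (shiftMons (F × F) ℓ m).image
    (· + mo.degree (derivMon (indicatorMon (graphOn ι b)) (NW F d)))

variable [DecidableEq κ] (mo : MonomialOrder (F × F)) (ι : κ ↪ F) {ℓ m : ℕ}

theorem card_biUnion_shiftedLeadingMons_le_finrank (hκ : Fintype.card κ < d)
    (hd : d ≤ Fintype.card F) :
    #(univ.biUnion (shiftedLeadingMons d mo ι ℓ m)) ≤
      Module.finrank F (shiftedSpan (Fintype.card κ) ℓ m (NW F d)) := by
  have := finiteDimensional_shiftedSpan (K := F) (Fintype.card κ) ℓ m (NW F d)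
  refine mo.card_le_finrank _ _ fun w hw => ?_
  obtain ⟨b, -, hw⟩ := mem_biUnion.1 hw
  obtain ⟨e, he, rfl⟩ := mem_image.1 hw
  exact exists_mem_shiftedSpan_degree_eq mo (by rw [monDeg_indicatorMon, card_graphOn])
    (derivMon_NW_ne_zero_and_degree_eq mo ι hκ hd b).1 he

theorem card_inter_shiftedLeadingMons_le (hκ : Fintype.card κ < d) (hd : d ≤ Fintype.card F)
    (hℓ : 0 < ℓ) (hm : 0 < m) {b b' : κ → F} (hbb' : b ≠ b') :
    #(shiftedLeadingMons d mo ι ℓ m b ∩ shiftedLeadingMons d mo ι ℓ m b') ≤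
      (Fintype.card F ^ 2 - (Fintype.card F - d - Fintype.card κ)).choose
        (m - (Fintype.card F - d - Fintype.card κ)) * (ℓ - 1).choose (m - 1) := by
  obtain ⟨a, ha, hdeg⟩ := (derivMon_NW_ne_zero_and_degree_eq mo ι hκ hd b).2
  obtain ⟨a', ha', hdeg'⟩ := (derivMon_NW_ne_zero_and_degree_eq mo ι hκ hd b').2
  rw [shiftedLeadingMons, shiftedLeadingMons, hdeg, hdeg', sq, ← Fintype.card_prod]
  exact card_inter_image_add_indicatorMon_le hℓ hm
    (card_sub_sub_le_card_sdiff_polyGraph ι hbb' ha ha')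

end NisanWigderson

theorem stmt10_general (k d r ℓ m : ℕ) (F : Type) [Field F] [Fintype F]
    (hcard : Fintype.card F = 2 ^ k) (hdn : d + r < 2 ^ k)
    (hrd : r + 1 < d) (hℓ : 0 < ℓ) (hm : 0 < m)
    (hcond : (2 ^ k) ^ r *
        ((2 ^ k) ^ 2 - (2 ^ k - d - r)).choose (m - (2 ^ k - d - r)) ≤
      ((2 ^ k) ^ 2).choose m) :
    (2 ^ k) ^ r * ((2 ^ k) ^ 2).choose m * (ℓ - 1).choose (m - 1) ≤
      2 * Module.finrank F (shiftedSpan r ℓ m (NW F d)) := by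
  classical
  obtain ⟨mo⟩ : Nonempty (MonomialOrder (F × F)) :=
    let := LinearOrder.lift' _ (Fintype.equivFin (F × F)).injective
    ⟨.lex⟩
  obtain ⟨ι⟩ : Nonempty (Fin r ↪ F) := Function.Embedding.nonempty_of_card_le (by simp; omega)
  have hκ : Fintype.card (Fin r) < d := by rw [Fintype.card_fin]; omega
  have hd : d ≤ Fintype.card F := by omega
  have hB : #(univ : Finset (Fin r → F)) = (2 ^ k) ^ r := by simp [hcard]
  have hE : #(shiftMons (F × F) ℓ m) = ((2 ^ k) ^ 2).choose m * (ℓ - 1).choose (m - 1) := by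
    rw [card_shiftMons hℓ hm, Fintype.card_prod, hcard, sq]
  have hinter (b b' : Fin r → F) (hbb' : b ≠ b') :=
    card_inter_shiftedLeadingMons_le mo ι hκ hd hℓ hm hbb'
  have hrank := card_biUnion_shiftedLeadingMons_le_finrank mo ι (ℓ := ℓ) (m := m) hκ hd
  simp only [hcard, Fintype.card_fin] at hinter
  rw [Fintype.card_fin] at hrank
  have hmain := mul_le_two_mul_card_biUnion univ (shiftedLeadingMons d mo ι ℓ m)
    (fun b _ => card_image_of_injective _ (add_left_injective _)) (fun b _ b' _ => hinter b b')
    (by rw [hB, hE, ← mul_assoc]; exact Nat.mul_le_mul_right _ hcond)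
  rw [hB, hE, ← mul_assoc] at hmain
  exact hmain.trans (Nat.mul_le_mul_left 2 hrank)

/-- Let `n = 2^k`, `N = n²`, `d < n`, and `r, ℓ, m` positive with
`n - r > d`, `r < d - 1`, `n - d - r ≤ m ≤ N`, and suppose
`n^r · C(N-(n-d-r), m-(n-d-r)) ≤ C(N, m)`. Then
`Dim⟨∂^r NW_d⟩_{(ℓ,m)} ≥ (1/2) n^r C(N, m) C(ℓ-1, m-1)`. -/
theorem stmt10 (k d r ℓ m : ℕ) (F : Type) [Field F] [Fintype F]
    (hcard : Fintype.card F = 2 ^ k) (hd1 : 1 ≤ d) (hdn : d + r < 2 ^ k)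
    (hr : 0 < r) (hrd : r + 1 < d) (hℓ : 0 < ℓ) (hm : 0 < m)
    (hmΔ : 2 ^ k - d - r ≤ m) (hmN : m ≤ (2 ^ k) ^ 2)
    (hcond : (2 ^ k) ^ r *
        ((2 ^ k) ^ 2 - (2 ^ k - d - r)).choose (m - (2 ^ k - d - r)) ≤
      ((2 ^ k) ^ 2).choose m) :
    (2 ^ k) ^ r * ((2 ^ k) ^ 2).choose m * (ℓ - 1).choose (m - 1) ≤
      2 * Module.finrank F (shiftedSpan r ℓ m (NW F d)) :=
  stmt10_general k d r ℓ m F hcard hdn hrd hℓ hm hcond
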